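/- Let d = 2 and let S*, defined for x_d ∈ (-1/2,1/2) by S*_{αβγδ}(x_d) = (e_α⊗e_β) : ∫_Y A(·,x_d)(e(W^{γδ})(·,x_d) − x_d e_γ⊗e_δ), where W^{γδ} is the bending corrector. Then for every odd ξ ∈ L²(-1/2,1/2): ∫_{-1/2}^{1/2} ξ(x_d) S*_{αβγδ}(x_d) dx_d = ∫_{-1/2}^{1/2} x_d (T^{*,ξ}_{αβ}(x_d))_{γδ} dx_d, where T^{*,ξ}_{αβ}(x_d) = ∫_Y A(x',x_d)(e(W^{αβ,ξ})(x',x_d) − ξ(x_d) e_α⊗e_β) dx' and W^{αβ,ξ} ∈ W(𝒴) solves ∫_𝒴 A(e(W^{αβ,ξ}) − ξ(x_d)e_α⊗e_β):e(v) = 0 for all v ∈ W(𝒴). Moreover ‖S*_{αβγδ}‖_{L²(-1/2,1/2)} ≤ c₊²/c₋ + c₊. -/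

import Mathlib

/-!
Testing the bending corrector equation against `W^{αβ,ξ}` and the equation of `W^{αβ,ξ}`
against `W^{γδ}`, the symmetry `A_{ijkl} = A_{klij}` identifies both sides of the identity with
`-∫_𝒴 A (e(W^{γδ}) - x_d e_γ⊗e_δ) : (e(W^{αβ,ξ}) - ξ(x_d) e_α⊗e_β)`.

For the bound, testing the bending corrector equation against `W^{γγ}` itself and using
ellipticity, boundedness and Cauchy–Schwarz gives
`c₋ ‖e(W^{γγ}) - x_d e_γ⊗e_γ‖ ≤ c₊ ‖x_d‖_{L²(𝒴)} ≤ c₊ / 2`. Since `S*(x_d)` is the average over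
`Y` of a component of `A` applied to this strain, Jensen's inequality on each slice yields
`‖S*‖_{L²} ≤ c₊² / (2 c₋)`.
-/

open MeasureTheory Real

noncomputable section

/-- Partial derivative of `f` in the coordinate direction `i`. -/
def pd {n : ℕ} (f : (Fin n → ℝ) → ℝ) (i : Fin n) (x : Fin n → ℝ) : ℝ :=
  fderiv ℝ f x (Pi.single i 1)

/-- The plate-type domain `ω × (-1/2, 1/2)`. -/
def cyl {d : ℕ} (ω : Set (Fin d → ℝ)) : Set (Fin (d + 1) → ℝ) :=
  {x | (fun i : Fin d => x i.castSucc) ∈ ω ∧ x (Fin.last d) ∈ Set.Ioo (-(1:ℝ)/2) (1/2)}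

/-- The open unit cube `(0,1)^d`. -/
def unitCube (d : ℕ) : Set (Fin d → ℝ) := Set.univ.pi fun _ => Set.Ioo (0:ℝ) 1

/-- The periodicity cell `𝒴 = (0,1)^d × (-1/2,1/2)`. -/
def cellY (d : ℕ) : Set (Fin (d + 1) → ℝ) := cyl (unitCube d)

/-- `f` is 1-periodic in each of the first `d` (horizontal) variables. -/
def XPeriodic {d : ℕ} {β : Type*} (f : (Fin (d + 1) → ℝ) → β) : Prop :=
  ∀ (x : Fin (d + 1) → ℝ) (i : Fin d), f (x + Pi.single i.castSucc 1) = f x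

/-- Symmetric gradient (strain) of a vector field. -/
def strain {d : ℕ} (u : (Fin (d + 1) → ℝ) → (Fin (d + 1) → ℝ)) (x : Fin (d + 1) → ℝ)
    (i j : Fin (d + 1)) : ℝ :=
  (pd (fun y => u y i) j x + pd (fun y => u y j) i x) / 2

/-- Scaling factors of the scaled strain `e^ε`: `1`, `ε⁻¹` or `ε⁻²` according to the number
of vertical indices. -/
def escale {d : ℕ} (ε : ℝ) (i j : Fin (d + 1)) : ℝ :=
  if i = Fin.last d then (if j = Fin.last d then ε⁻¹ ^ 2 else ε⁻¹)
  else (if j = Fin.last d then ε⁻¹ else 1)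

/-- Squared pointwise (Frobenius) norm of the scaled strain `e^ε(u)`. -/
def strainEpsSq {d : ℕ} (ε : ℝ) (u : (Fin (d + 1) → ℝ) → (Fin (d + 1) → ℝ))
    (x : Fin (d + 1) → ℝ) : ℝ :=
  ∑ i : Fin (d + 1), ∑ j : Fin (d + 1), (escale ε i j * strain u x i j) ^ 2

/-- Reflection of a point with respect to the midplane `x_d = 0`. -/
def reflV {d : ℕ} (x : Fin (d + 1) → ℝ) : Fin (d + 1) → ℝ :=
  Function.update x (Fin.last d) (-(x (Fin.last d)))

/-- Sign attached to an index: `-1` for the vertical index, `1` otherwise. -/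
def vsgn {d : ℕ} (i : Fin (d + 1)) : ℝ := if i = Fin.last d then -1 else 1

/-- The matrix `e_α ⊗ e_β` (planar indices viewed inside `ℝ^{d+1}`). -/
def membM {d : ℕ} (α β : Fin d) (k l : Fin (d + 1)) : ℝ :=
  if k = α.castSucc ∧ l = β.castSucc then 1 else 0

/-- The usual symmetries of an elasticity tensor:
`A_{ijkl} = A_{jikl} = A_{ijlk} = A_{klij}`. -/
def tensSym {d : ℕ}
    (A : (Fin (d + 1) → ℝ) → Fin (d + 1) → Fin (d + 1) → Fin (d + 1) → Fin (d + 1) → ℝ) :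
    Prop :=
  ∀ (x : Fin (d + 1) → ℝ) (i j k l : Fin (d + 1)),
    A x i j k l = A x j i k l ∧ A x i j k l = A x i j l k ∧ A x i j k l = A x k l i j

/-- Uniform ellipticity of the tensor on symmetric matrices: `c₋|ξ|² ≤ ξ : Aξ`. -/
def tensElliptic {d : ℕ}
    (A : (Fin (d + 1) → ℝ) → Fin (d + 1) → Fin (d + 1) → Fin (d + 1) → Fin (d + 1) → ℝ)
    (cm : ℝ) : Prop :=
  ∀ (x : Fin (d + 1) → ℝ) (ξ : Fin (d + 1) → Fin (d + 1) → ℝ), (∀ i j, ξ i j = ξ j i) →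
    cm * (∑ i : Fin (d + 1), ∑ j : Fin (d + 1), (ξ i j) ^ 2)
      ≤ ∑ i : Fin (d + 1), ∑ j : Fin (d + 1), ∑ k : Fin (d + 1), ∑ l : Fin (d + 1),
          ξ i j * A x i j k l * ξ k l

/-- Uniform boundedness of the tensor on symmetric matrices: `|Aξ| ≤ c₊|ξ|`. -/
def tensBounded {d : ℕ}
    (A : (Fin (d + 1) → ℝ) → Fin (d + 1) → Fin (d + 1) → Fin (d + 1) → Fin (d + 1) → ℝ)
    (cp : ℝ) : Prop :=
  ∀ (x : Fin (d + 1) → ℝ) (ξ : Fin (d + 1) → Fin (d + 1) → ℝ), (∀ i j, ξ i j = ξ j i) →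
    ∑ i : Fin (d + 1), ∑ j : Fin (d + 1),
        (∑ k : Fin (d + 1), ∑ l : Fin (d + 1), A x i j k l * ξ k l) ^ 2
      ≤ cp ^ 2 * ∑ i : Fin (d + 1), ∑ j : Fin (d + 1), (ξ i j) ^ 2

/-- Membrane strain field `e(w^{αβ}) + e_α ⊗ e_β`. -/
def memStrain {d : ℕ} (w : Fin d → Fin d → (Fin (d + 1) → ℝ) → (Fin (d + 1) → ℝ))
    (α β : Fin d) (x : Fin (d + 1) → ℝ) (k l : Fin (d + 1)) : ℝ :=
  strain (w α β) x k l + membM α β k l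

/-- Bending strain field `e(W^{αβ}) − x_d e_α ⊗ e_β`. -/
def bendStrain {d : ℕ} (W : Fin d → Fin d → (Fin (d + 1) → ℝ) → (Fin (d + 1) → ℝ))
    (α β : Fin d) (x : Fin (d + 1) → ℝ) (k l : Fin (d + 1)) : ℝ :=
  strain (W α β) x k l - x (Fin.last d) * membM α β k l

/-- The membrane corrector equations. -/
def MembCorr {d : ℕ}
    (A : (Fin (d + 1) → ℝ) → Fin (d + 1) → Fin (d + 1) → Fin (d + 1) → Fin (d + 1) → ℝ)
    (w : Fin d → Fin d → (Fin (d + 1) → ℝ) → (Fin (d + 1) → ℝ)) : Prop :=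
  ∀ (α β : Fin d) (v : (Fin (d + 1) → ℝ) → (Fin (d + 1) → ℝ)),
    ContDiff ℝ 1 v → XPeriodic v →
    (∫ x in cellY d, ∑ i : Fin (d + 1), ∑ j : Fin (d + 1),
      (∑ k : Fin (d + 1), ∑ l : Fin (d + 1), A x i j k l * memStrain w α β x k l)
        * strain v x i j) = 0

/-- The bending corrector equations. -/
def BendCorr {d : ℕ}
    (A : (Fin (d + 1) → ℝ) → Fin (d + 1) → Fin (d + 1) → Fin (d + 1) → Fin (d + 1) → ℝ)
    (W : Fin d → Fin d → (Fin (d + 1) → ℝ) → (Fin (d + 1) → ℝ)) : Prop :=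
  ∀ (α β : Fin d) (v : (Fin (d + 1) → ℝ) → (Fin (d + 1) → ℝ)),
    ContDiff ℝ 1 v → XPeriodic v →
    (∫ x in cellY d, ∑ i : Fin (d + 1), ∑ j : Fin (d + 1),
      (∑ k : Fin (d + 1), ∑ l : Fin (d + 1), A x i j k l * bendStrain W α β x k l)
        * strain v x i j) = 0

/-- The homogenized membrane tensor `K*₁₁`. -/
def K11 {d : ℕ}
    (A : (Fin (d + 1) → ℝ) → Fin (d + 1) → Fin (d + 1) → Fin (d + 1) → Fin (d + 1) → ℝ)
    (w : Fin d → Fin d → (Fin (d + 1) → ℝ) → (Fin (d + 1) → ℝ)) (α β γ δ : Fin d) : ℝ :=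
  ∫ x in cellY d, ∑ i : Fin (d + 1), ∑ j : Fin (d + 1), ∑ k : Fin (d + 1), ∑ l : Fin (d + 1),
    A x i j k l * memStrain w α β x k l * memStrain w γ δ x i j

/-- The homogenized coupling tensor `K*₁₂`. -/
def K12 {d : ℕ}
    (A : (Fin (d + 1) → ℝ) → Fin (d + 1) → Fin (d + 1) → Fin (d + 1) → Fin (d + 1) → ℝ)
    (w W : Fin d → Fin d → (Fin (d + 1) → ℝ) → (Fin (d + 1) → ℝ)) (α β γ δ : Fin d) : ℝ :=
  ∫ x in cellY d, ∑ i : Fin (d + 1), ∑ j : Fin (d + 1), ∑ k : Fin (d + 1), ∑ l : Fin (d + 1),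
    A x i j k l * memStrain w α β x k l * bendStrain W γ δ x i j

/-- The homogenized bending tensor `K*₂₂`. -/
def K22 {d : ℕ}
    (A : (Fin (d + 1) → ℝ) → Fin (d + 1) → Fin (d + 1) → Fin (d + 1) → Fin (d + 1) → ℝ)
    (W : Fin d → Fin d → (Fin (d + 1) → ℝ) → (Fin (d + 1) → ℝ)) (α β γ δ : Fin d) : ℝ :=
  ∫ x in cellY d, ∑ i : Fin (d + 1), ∑ j : Fin (d + 1), ∑ k : Fin (d + 1), ∑ l : Fin (d + 1),
    A x i j k l * bendStrain W α β x k l * bendStrain W γ δ x i j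

/-- The sliced tensor `S*_{αβγδ}(x_d) = (e_α⊗e_β) : ∫_Y A(e(W^{γδ}) − x_d e_γ⊗e_δ)`
(dimension `d = 2`: planar indices in `Fin 1`). -/
def Sstar (A : (Fin (1 + 1) → ℝ) → Fin (1 + 1) → Fin (1 + 1) → Fin (1 + 1) → Fin (1 + 1) → ℝ)
    (W : Fin 1 → Fin 1 → (Fin (1 + 1) → ℝ) → (Fin (1 + 1) → ℝ))
    (α β γ δ : Fin 1) (t : ℝ) : ℝ :=
  ∫ x' in unitCube 1, ∑ k : Fin (1 + 1), ∑ l : Fin (1 + 1),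
    A (Fin.snoc x' t) α.castSucc β.castSucc k l *
      (strain (W γ δ) (Fin.snoc x' t) k l - t * membM γ δ k l)

/-- The sliced matrix `(T^{*,ξ}_{αβ}(x_d))_{γδ} = ∫_Y [A(e(W^{αβ,ξ}) − ξ(x_d) e_α⊗e_β)]_{γδ}`. -/
def Txi (A : (Fin (1 + 1) → ℝ) → Fin (1 + 1) → Fin (1 + 1) → Fin (1 + 1) → Fin (1 + 1) → ℝ)
    (Wxi : (Fin (1 + 1) → ℝ) → (Fin (1 + 1) → ℝ)) (ξ : ℝ → ℝ)
    (α β γ δ : Fin 1) (t : ℝ) : ℝ :=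
  ∫ x' in unitCube 1, ∑ k : Fin (1 + 1), ∑ l : Fin (1 + 1),
    A (Fin.snoc x' t) γ.castSucc δ.castSucc k l *
      (strain Wxi (Fin.snoc x' t) k l - ξ t * membM α β k l)

section Cell

variable {d : ℕ}

lemma piFinSuccAbove_last_symm_apply (p : ℝ × (Fin d → ℝ)) :
    (MeasurableEquiv.piFinSuccAbove (fun _ : Fin (d + 1) => ℝ) (Fin.last d)).symm p
      = Fin.snoc p.2 p.1 := by
  simp [MeasurableEquiv.piFinSuccAbove, Fin.insertNthEquiv, Fin.insertNth_last']

lemma piFinSuccAbove_last_symm_preimage_cyl (ω : Set (Fin d → ℝ)) :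
    (MeasurableEquiv.piFinSuccAbove (fun _ : Fin (d + 1) => ℝ) (Fin.last d)).symm ⁻¹' cyl ω
      = Set.Ioo (-(1:ℝ)/2) (1/2) ×ˢ ω := by
  ext ⟨t, x'⟩
  simp [cyl, and_comm]

lemma integrableOn_cyl_iff {ω : Set (Fin d → ℝ)} {f : (Fin (d + 1) → ℝ) → ℝ} :
    IntegrableOn f (cyl ω) ↔ Integrable (fun p : ℝ × (Fin d → ℝ) => f (Fin.snoc p.2 p.1))
      ((volume.restrict (Set.Ioo (-(1:ℝ)/2) (1/2))).prod (volume.restrict ω)) := by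
  have he := (volume_preserving_piFinSuccAbove (fun _ : Fin (d + 1) => ℝ) (Fin.last d)).symm
  rw [← he.integrableOn_comp_preimage (MeasurableEquiv.measurableEmbedding _),
    piFinSuccAbove_last_symm_preimage_cyl, IntegrableOn, Measure.volume_eq_prod,
    ← Measure.prod_restrict]
  simp only [Function.comp_def, piFinSuccAbove_last_symm_apply]

lemma setIntegral_cyl {ω : Set (Fin d → ℝ)} {f : (Fin (d + 1) → ℝ) → ℝ}
    (hf : IntegrableOn f (cyl ω)) :
    ∫ x in cyl ω, f x = ∫ t in Set.Ioo (-(1:ℝ)/2) (1/2), ∫ x' in ω, f (Fin.snoc x' t) := by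
  have he := (volume_preserving_piFinSuccAbove (fun _ : Fin (d + 1) => ℝ) (Fin.last d)).symm
  rw [← he.setIntegral_preimage_emb (MeasurableEquiv.measurableEmbedding _),
    piFinSuccAbove_last_symm_preimage_cyl, Measure.volume_eq_prod, setIntegral_prod]
  · simp only [piFinSuccAbove_last_symm_apply]
  · rw [IntegrableOn, ← Measure.prod_restrict]
    simpa only [piFinSuccAbove_last_symm_apply] using integrableOn_cyl_iff.1 hf

lemma volume_cyl (ω : Set (Fin d → ℝ)) : volume (cyl ω) = volume ω := by
  have he := (volume_preserving_piFinSuccAbove (fun _ : Fin (d + 1) => ℝ) (Fin.last d)).symm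
  rw [← he.measure_preimage_equiv, piFinSuccAbove_last_symm_preimage_cyl, Measure.volume_eq_prod,
    Measure.prod_prod, Real.volume_Ioo]
  norm_num

lemma measurableSet_cyl {ω : Set (Fin d → ℝ)} (hω : MeasurableSet ω) : MeasurableSet (cyl ω) :=
  (hω.preimage (measurable_pi_lambda _ fun i => measurable_pi_apply i.castSucc)).inter
    (measurableSet_Ioo.preimage (measurable_pi_apply _))

lemma measurableSet_unitCube : MeasurableSet (unitCube d) :=
  MeasurableSet.univ_pi fun _ => measurableSet_Ioo

lemma volume_unitCube : volume (unitCube d) = 1 := by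
  simp [unitCube, volume_pi_pi, Real.volume_Ioo]

lemma volume_cellY : volume (cellY d) = 1 := by
  rw [cellY, volume_cyl, volume_unitCube]

lemma unitCube_subset_Icc : unitCube d ⊆ Set.Icc 0 1 :=
  fun _ hx => ⟨fun i => (hx i trivial).1.le, fun i => (hx i trivial).2.le⟩

lemma cellY_subset_Icc : cellY d ⊆ Set.Icc (-1) 1 := by
  rintro x ⟨hx', hxd, hxd'⟩
  have hx : ∀ i, -1 ≤ x i ∧ x i ≤ 1 := fun i => by
    induction i using Fin.lastCases with
    | last => constructor <;> linarith
    | cast i => obtain ⟨h0, h1⟩ := hx' i trivial; constructor <;> linarith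
  exact ⟨fun i => (hx i).1, fun i => (hx i).2⟩

lemma Continuous.integrableOn_cellY {f : (Fin (d + 1) → ℝ) → ℝ} (hf : Continuous f) :
    IntegrableOn f (cellY d) :=
  (hf.continuousOn.integrableOn_compact isCompact_Icc).mono_set cellY_subset_Icc

lemma Continuous.integrableOn_unitCube {f : (Fin d → ℝ) → ℝ} (hf : Continuous f) :
    IntegrableOn f (unitCube d) :=
  (hf.continuousOn.integrableOn_compact isCompact_Icc).mono_set unitCube_subset_Icc

end Cell

section TensorAlgebra

variable {d : ℕ}

def ddot (ξ η : Fin (d + 1) → Fin (d + 1) → ℝ) : ℝ := ∑ i, ∑ j, ξ i j * η i j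

def stress (A : (Fin (d + 1) → ℝ) → Fin (d + 1) → Fin (d + 1) → Fin (d + 1) → Fin (d + 1) → ℝ)
    (x : Fin (d + 1) → ℝ) (ξ : Fin (d + 1) → Fin (d + 1) → ℝ) (i j : Fin (d + 1)) : ℝ :=
  ∑ k, ∑ l, A x i j k l * ξ k l

variable {A : (Fin (d + 1) → ℝ) → Fin (d + 1) → Fin (d + 1) → Fin (d + 1) → Fin (d + 1) → ℝ}

lemma sq_le_ddot_self (ξ : Fin (d + 1) → Fin (d + 1) → ℝ) (i j : Fin (d + 1)) :
    ξ i j ^ 2 ≤ ddot ξ ξ := by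
  unfold ddot
  calc ξ i j ^ 2 ≤ ∑ l, ξ i l * ξ i l := by
        rw [sq]; exact Finset.single_le_sum (f := fun l => ξ i l * ξ i l)
          (fun l _ => mul_self_nonneg _) (Finset.mem_univ j)
    _ ≤ ∑ k, ∑ l, ξ k l * ξ k l :=
        Finset.single_le_sum (f := fun k => ∑ l, ξ k l * ξ k l)
          (fun k _ => Finset.sum_nonneg fun l _ => mul_self_nonneg _) (Finset.mem_univ i)

lemma ddot_membM (ξ : Fin (d + 1) → Fin (d + 1) → ℝ) (α β : Fin d) :
    ddot ξ (membM α β) = ξ α.castSucc β.castSucc := by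
  simp [ddot, membM, ite_and]

lemma ddot_sub_mul_membM (ξ η : Fin (d + 1) → Fin (d + 1) → ℝ) (c : ℝ) (α β : Fin d) :
    ddot ξ (fun k l => η k l - c * membM α β k l) = ddot ξ η - c * ξ α.castSucc β.castSucc := by
  rw [← ddot_membM ξ α β]
  simp only [ddot, Finset.mul_sum, ← Finset.sum_sub_distrib]
  exact Finset.sum_congr rfl fun i _ => Finset.sum_congr rfl fun j _ => by ring

lemma ddot_stress_comm (hA : tensSym A) (x : Fin (d + 1) → ℝ)
    (ξ η : Fin (d + 1) → Fin (d + 1) → ℝ) :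
    ddot (stress A x ξ) η = ddot (stress A x η) ξ := by
  simp only [ddot, stress, Finset.sum_mul, ← Fintype.sum_prod_type']
  refine Fintype.sum_equiv ⟨fun p => (p.2.2.1, p.2.2.2, p.1, p.2.1),
    fun p => (p.2.2.1, p.2.2.2, p.1, p.2.1), fun _ => rfl, fun _ => rfl⟩ _ _ fun p => ?_
  rw [Equiv.coe_fn_mk, (hA x _ _ _ _).2.2]
  ring

lemma tensElliptic.mul_ddot_le_ddot_stress {cm : ℝ} (hA : tensElliptic A cm) (x : Fin (d + 1) → ℝ)
    {ξ : Fin (d + 1) → Fin (d + 1) → ℝ} (hξ : ∀ i j, ξ i j = ξ j i) :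
    cm * ddot ξ ξ ≤ ddot (stress A x ξ) ξ := by
  convert hA x ξ hξ using 1
  · simp only [ddot, sq]
  · simp only [ddot, stress, Finset.sum_mul]
    congr! 4 with i _ j _ k _ l _
    ring

lemma tensBounded.ddot_stress_le {cp : ℝ} (hA : tensBounded A cp) (x : Fin (d + 1) → ℝ)
    {ξ : Fin (d + 1) → Fin (d + 1) → ℝ} (hξ : ∀ i j, ξ i j = ξ j i) :
    ddot (stress A x ξ) (stress A x ξ) ≤ cp ^ 2 * ddot ξ ξ := by
  simpa only [ddot, stress, sq] using hA x ξ hξ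

end TensorAlgebra

lemma sq_integral_mul_le {X : Type*} [MeasurableSpace X] {μ : Measure X} {f g : X → ℝ}
    (hf : Integrable (fun x => f x ^ 2) μ) (hg : Integrable (fun x => g x ^ 2) μ)
    (hfg : Integrable (fun x => f x * g x) μ) :
    (∫ x, f x * g x ∂μ) ^ 2 ≤ (∫ x, f x ^ 2 ∂μ) * ∫ x, g x ^ 2 ∂μ := by
  have hquad : ∀ t : ℝ,
      0 ≤ (∫ x, f x ^ 2 ∂μ) * (t * t) + (2 * ∫ x, f x * g x ∂μ) * t + ∫ x, g x ^ 2 ∂μ := by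
    intro t
    have hexp : ∫ x, (t * f x + g x) ^ 2 ∂μ
        = (∫ x, f x ^ 2 ∂μ) * (t * t) + (2 * ∫ x, f x * g x ∂μ) * t + ∫ x, g x ^ 2 ∂μ := by
      simp_rw [fun x => show (t * f x + g x) ^ 2
        = t * t * f x ^ 2 + 2 * t * (f x * g x) + g x ^ 2 by ring]
      rw [integral_add _ hg, integral_add (hf.const_mul _) (hfg.const_mul _), integral_const_mul,
        integral_const_mul]
      · ring
      · exact (hf.const_mul _).add (hfg.const_mul _)
    exact hexp ▸ integral_nonneg fun x => sq_nonneg _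
  have := discrim_le_zero hquad
  rw [discrim] at this
  nlinarith

lemma sq_setIntegral_unitCube_le {d : ℕ} {f : (Fin d → ℝ) → ℝ} (hf : Continuous f) :
    (∫ x in unitCube d, f x) ^ 2 ≤ ∫ x in unitCube d, f x ^ 2 := by
  have h := sq_integral_mul_le (g := fun _ => (1 : ℝ)) (hf.pow 2).integrableOn_unitCube
    continuous_const.integrableOn_unitCube (hf.mul continuous_const).integrableOn_unitCube
  simpa [measureReal_def, volume_unitCube] using h

section Corrector

variable {d : ℕ}

/-- `bendStrain W α β` is `profileStrain (W α β) id α β` by definition. -/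
def profileStrain (u : (Fin (d + 1) → ℝ) → (Fin (d + 1) → ℝ)) (ξ : ℝ → ℝ) (α β : Fin d)
    (x : Fin (d + 1) → ℝ) (k l : Fin (d + 1)) : ℝ :=
  strain u x k l - ξ (x (Fin.last d)) * membM α β k l

/-- Weak form of `div (A s) = 0` in the cell, with periodic lateral boundary conditions. -/
def IsEquilibrated
    (A : (Fin (d + 1) → ℝ) → Fin (d + 1) → Fin (d + 1) → Fin (d + 1) → Fin (d + 1) → ℝ)
    (s : (Fin (d + 1) → ℝ) → Fin (d + 1) → Fin (d + 1) → ℝ) : Prop :=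
  ∀ v : (Fin (d + 1) → ℝ) → (Fin (d + 1) → ℝ), ContDiff ℝ 1 v → XPeriodic v →
    ∫ x in cellY d, ddot (stress A x (s x)) (strain v x) = 0

variable {A : (Fin (d + 1) → ℝ) → Fin (d + 1) → Fin (d + 1) → Fin (d + 1) → Fin (d + 1) → ℝ}

lemma profileStrain_symm (u : (Fin (d + 1) → ℝ) → (Fin (d + 1) → ℝ)) (ξ : ℝ → ℝ) (α : Fin d)
    (x : Fin (d + 1) → ℝ) (i j : Fin (d + 1)) :
    profileStrain u ξ α α x i j = profileStrain u ξ α α x j i := by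
  simp only [profileStrain, strain, membM, add_comm, and_comm]

lemma continuous_strain {u : (Fin (d + 1) → ℝ) → (Fin (d + 1) → ℝ)} (hu : ContDiff ℝ 1 u) :
    Continuous (strain u) := by
  have hpd : ∀ m n, Continuous fun x => pd (fun y => u y m) n x := fun m n =>
    ((contDiff_pi.1 hu m).continuous_fderiv_apply one_ne_zero).comp
      (continuous_id.prodMk continuous_const)
  exact continuous_pi fun i => continuous_pi fun j => ((hpd i j).add (hpd j i)).div_const 2

lemma continuous_profileStrain {u : (Fin (d + 1) → ℝ) → (Fin (d + 1) → ℝ)} {ξ : ℝ → ℝ}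
    (hu : ContDiff ℝ 1 u) (hξ : Continuous ξ) (α β : Fin d) :
    Continuous (profileStrain u ξ α β) := by
  have := continuous_strain hu
  unfold profileStrain
  fun_prop

lemma Continuous.stress (hA : Continuous A) {s : (Fin (d + 1) → ℝ) → Fin (d + 1) → Fin (d + 1) → ℝ}
    (hs : Continuous s) : Continuous fun x => stress A x (s x) := by
  unfold _root_.stress
  fun_prop

@[fun_prop]
lemma Continuous.ddot {X : Type*} [TopologicalSpace X] {ξ η : X → Fin (d + 1) → Fin (d + 1) → ℝ}
    (hξ : Continuous ξ) (hη : Continuous η) : Continuous fun x => ddot (ξ x) (η x) := by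
  unfold _root_.ddot
  fun_prop

lemma IsEquilibrated.integral_ddot_stress_profileStrain
    {s : (Fin (d + 1) → ℝ) → Fin (d + 1) → Fin (d + 1) → ℝ} (hs : IsEquilibrated A s)
    (hA : Continuous A) (hsc : Continuous s) {u : (Fin (d + 1) → ℝ) → (Fin (d + 1) → ℝ)}
    (hu : ContDiff ℝ 1 u) (hup : XPeriodic u) {ξ : ℝ → ℝ} (hξ : Continuous ξ) (α β : Fin d) :
    ∫ x in cellY d, ddot (stress A x (s x)) (profileStrain u ξ α β x)
      = -∫ x in cellY d, ξ (x (Fin.last d)) * stress A x (s x) α.castSucc β.castSucc := by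
  have hσ := hA.stress hsc
  calc ∫ x in cellY d, ddot (stress A x (s x)) (profileStrain u ξ α β x)
      = ∫ x in cellY d, (ddot (stress A x (s x)) (strain u x)
          - ξ (x (Fin.last d)) * stress A x (s x) α.castSucc β.castSucc) :=
        integral_congr_ae (.of_forall fun x => ddot_sub_mul_membM _ _ _ α β)
    _ = -∫ x in cellY d, ξ (x (Fin.last d)) * stress A x (s x) α.castSucc β.castSucc := by
      rw [integral_sub (hσ.ddot (continuous_strain hu)).integrableOn_cellY
        (by fun_prop : Continuous _).integrableOn_cellY, hs u hu hup, zero_sub]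

theorem integral_mul_stress_profileStrain_comm (hA : Continuous A) (hAsym : tensSym A)
    {u₁ u₂ : (Fin (d + 1) → ℝ) → (Fin (d + 1) → ℝ)} {ξ₁ ξ₂ : ℝ → ℝ} {α β γ δ : Fin d}
    (hu₁ : ContDiff ℝ 1 u₁) (hu₁p : XPeriodic u₁) (hξ₁ : Continuous ξ₁)
    (h₁ : IsEquilibrated A (profileStrain u₁ ξ₁ γ δ))
    (hu₂ : ContDiff ℝ 1 u₂) (hu₂p : XPeriodic u₂) (hξ₂ : Continuous ξ₂)
    (h₂ : IsEquilibrated A (profileStrain u₂ ξ₂ α β)) :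
    ∫ x in cellY d,
        ξ₂ (x (Fin.last d)) * stress A x (profileStrain u₁ ξ₁ γ δ x) α.castSucc β.castSucc
      = ∫ x in cellY d,
          ξ₁ (x (Fin.last d)) * stress A x (profileStrain u₂ ξ₂ α β x) γ.castSucc δ.castSucc := by
  have e₁ := h₁.integral_ddot_stress_profileStrain hA (continuous_profileStrain hu₁ hξ₁ γ δ)
    hu₂ hu₂p hξ₂ α β
  have e₂ := h₂.integral_ddot_stress_profileStrain hA (continuous_profileStrain hu₂ hξ₂ α β)
    hu₁ hu₁p hξ₁ γ δ
  rw [← neg_inj, ← e₁, ← e₂]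
  exact integral_congr_ae (.of_forall fun x => ddot_stress_comm hAsym x _ _)

lemma ddot_self_nonneg (ξ : Fin (d + 1) → Fin (d + 1) → ℝ) : 0 ≤ ddot ξ ξ :=
  Finset.sum_nonneg fun _ _ => Finset.sum_nonneg fun _ _ => mul_self_nonneg _

lemma integral_stress_sq_le {cp : ℝ} (hA : Continuous A) (hAbd : tensBounded A cp)
    {s : (Fin (d + 1) → ℝ) → Fin (d + 1) → Fin (d + 1) → ℝ} (hsc : Continuous s)
    (hs : ∀ x i j, s x i j = s x j i) (i j : Fin (d + 1)) :
    ∫ x in cellY d, stress A x (s x) i j ^ 2 ≤ cp ^ 2 * ∫ x in cellY d, ddot (s x) (s x) := by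
  have hσ := hA.stress hsc
  rw [← integral_const_mul]
  refine integral_mono (by fun_prop : Continuous _).integrableOn_cellY
    (by fun_prop : Continuous _).integrableOn_cellY fun x => ?_
  exact (sq_le_ddot_self _ i j).trans (hAbd.ddot_stress_le x (hs x))

theorem IsEquilibrated.sq_mul_integral_ddot_profileStrain_le {cm cp : ℝ} (hcm : 0 < cm)
    (hA : Continuous A) (hAell : tensElliptic A cm) (hAbd : tensBounded A cp)
    {u : (Fin (d + 1) → ℝ) → (Fin (d + 1) → ℝ)} {ξ : ℝ → ℝ} {γ : Fin d}
    (h : IsEquilibrated A (profileStrain u ξ γ γ)) (hu : ContDiff ℝ 1 u) (hup : XPeriodic u)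
    (hξ : Continuous ξ) :
    cm ^ 2 * ∫ x in cellY d, ddot (profileStrain u ξ γ γ x) (profileStrain u ξ γ γ x)
      ≤ cp ^ 2 * ∫ x in cellY d, ξ (x (Fin.last d)) ^ 2 := by
  set s := profileStrain u ξ γ γ
  have hsc : Continuous s := continuous_profileStrain hu hξ γ γ
  have hσ := hA.stress hsc
  set R := ∫ x in cellY d, ddot (s x) (s x)
  set P := ∫ x in cellY d, ξ (x (Fin.last d)) * stress A x (s x) γ.castSucc γ.castSucc
  set X := ∫ x in cellY d, ξ (x (Fin.last d)) ^ 2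
  have hR : 0 ≤ R := integral_nonneg fun x => ddot_self_nonneg _
  have hX : 0 ≤ X := integral_nonneg fun x => sq_nonneg _
  have hcoercive : cm * R ≤ -P := by
    rw [← h.integral_ddot_stress_profileStrain hA hsc hu hup hξ γ γ, ← integral_const_mul]
    exact integral_mono (by fun_prop : Continuous _).integrableOn_cellY
      (hσ.ddot hsc).integrableOn_cellY
      fun x => hAell.mul_ddot_le_ddot_stress x (profileStrain_symm u ξ γ x)
  have hCS : P ^ 2 ≤ X * ∫ x in cellY d, stress A x (s x) γ.castSucc γ.castSucc ^ 2 :=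
    sq_integral_mul_le (by fun_prop : Continuous _).integrableOn_cellY
      (by fun_prop : Continuous _).integrableOn_cellY
      (by fun_prop : Continuous _).integrableOn_cellY
  have hQ := integral_stress_sq_le hA hAbd hsc (profileStrain_symm u ξ γ) γ.castSucc γ.castSucc
  have hsq : cm ^ 2 * R * R ≤ cp ^ 2 * X * R := by
    nlinarith [mul_nonneg hcm.le hR, mul_le_mul_of_nonneg_left hQ hX]
  rcases hR.eq_or_lt with hR0 | hRpos
  · rw [← hR0, mul_zero]
    positivity
  · exact le_of_mul_le_mul_right hsq hRpos

lemma integral_last_sq_le_quarter : ∫ x in cellY d, x (Fin.last d) ^ 2 ≤ 1 / 4 := by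
  calc ∫ x in cellY d, x (Fin.last d) ^ 2 ≤ ∫ _ in cellY d, (1 / 4 : ℝ) :=
        setIntegral_mono_on (by fun_prop : Continuous _).integrableOn_cellY
          continuous_const.integrableOn_cellY (measurableSet_cyl measurableSet_unitCube)
          fun x ⟨_, hx⟩ => by nlinarith [hx.1, hx.2]
    _ = 1 / 4 := by simp [measureReal_def, volume_cellY]

theorem integral_stress_bendStrain_sq_le {cm cp : ℝ} (hcm : 0 < cm) (hA : Continuous A)
    (hAell : tensElliptic A cm) (hAbd : tensBounded A cp)
    {W : Fin d → Fin d → (Fin (d + 1) → ℝ) → (Fin (d + 1) → ℝ)} {γ : Fin d}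
    (hW : ContDiff ℝ 1 (W γ γ)) (hWp : XPeriodic (W γ γ))
    (hWeq : IsEquilibrated A (bendStrain W γ γ)) (i j : Fin (d + 1)) :
    ∫ x in cellY d, stress A x (bendStrain W γ γ x) i j ^ 2 ≤ (cp ^ 2 / (2 * cm)) ^ 2 := by
  have hsc : Continuous (bendStrain W γ γ) := continuous_profileStrain hW continuous_id γ γ
  have hQ := integral_stress_sq_le hA hAbd hsc (profileStrain_symm (W γ γ) id γ) i j
  have hE := IsEquilibrated.sq_mul_integral_ddot_profileStrain_le (u := W γ γ) (ξ := id)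
    (h := hWeq) hcm hA hAell hAbd hW hWp continuous_id
  have hR : cm ^ 2 * ∫ x in cellY d, ddot (bendStrain W γ γ x) (bendStrain W γ γ x)
      ≤ cp ^ 2 / 4 := by
    refine hE.trans ?_
    simpa [div_eq_mul_inv] using
      mul_le_mul_of_nonneg_left integral_last_sq_le_quarter (sq_nonneg cp)
  calc _ ≤ cp ^ 2 * ∫ x in cellY d, ddot (bendStrain W γ γ x) (bendStrain W γ γ x) := hQ
    _ ≤ (cp ^ 2 / (2 * cm)) ^ 2 := by
      rw [div_pow, le_div_iff₀ (by positivity)]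
      nlinarith [sq_nonneg cp]

end Corrector

lemma setIntegral_cellY_mul_last {d : ℕ} {g : ℝ → ℝ} {f : (Fin (d + 1) → ℝ) → ℝ}
    (hgf : IntegrableOn (fun x => g (x (Fin.last d)) * f x) (cellY d)) :
    ∫ x in cellY d, g (x (Fin.last d)) * f x
      = ∫ t in Set.Ioo (-(1:ℝ)/2) (1/2), g t * ∫ x' in unitCube d, f (Fin.snoc x' t) := by
  rw [cellY, setIntegral_cyl hgf]
  simp only [Fin.snoc_last, integral_const_mul]

lemma integral_sq_setIntegral_slice_le {d : ℕ} {f : (Fin (d + 1) → ℝ) → ℝ} (hf : Continuous f) :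
    ∫ t in Set.Ioo (-(1:ℝ)/2) (1/2), (∫ x' in unitCube d, f (Fin.snoc x' t)) ^ 2
      ≤ ∫ x in cellY d, f x ^ 2 := by
  have hf2 := (by fun_prop : Continuous fun x => f x ^ 2).integrableOn_cellY
  rw [cellY, setIntegral_cyl hf2]
  exact integral_mono_of_nonneg (.of_forall fun t => sq_nonneg _)
    (integrableOn_cyl_iff.1 hf2).integral_prod_left
    (.of_forall fun t => sq_setIntegral_unitCube_le (by fun_prop))

lemma Sstar_eq_setIntegral_stress
    (A : (Fin (1 + 1) → ℝ) → Fin (1 + 1) → Fin (1 + 1) → Fin (1 + 1) → Fin (1 + 1) → ℝ)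
    (W : Fin 1 → Fin 1 → (Fin (1 + 1) → ℝ) → (Fin (1 + 1) → ℝ)) (α β γ δ : Fin 1) (t : ℝ) :
    Sstar A W α β γ δ t = ∫ x' in unitCube 1,
      stress A (Fin.snoc x' t) (bendStrain W γ δ (Fin.snoc x' t)) α.castSucc β.castSucc := by
  simp only [Sstar, stress, bendStrain, Fin.snoc_last]

lemma Txi_eq_setIntegral_stress
    (A : (Fin (1 + 1) → ℝ) → Fin (1 + 1) → Fin (1 + 1) → Fin (1 + 1) → Fin (1 + 1) → ℝ)
    (Wxi : (Fin (1 + 1) → ℝ) → (Fin (1 + 1) → ℝ)) (ξ : ℝ → ℝ) (α β γ δ : Fin 1) (t : ℝ) :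
    Txi A Wxi ξ α β γ δ t = ∫ x' in unitCube 1,
      stress A (Fin.snoc x' t) (profileStrain Wxi ξ α β (Fin.snoc x' t)) γ.castSucc δ.castSucc := by
  simp only [Txi, stress, profileStrain, Fin.snoc_last]

theorem statement18_general (cm cp : ℝ) (hcm : 0 < cm) (hcp : 0 < cp)
    (A : (Fin (1 + 1) → ℝ) → Fin (1 + 1) → Fin (1 + 1) → Fin (1 + 1) → Fin (1 + 1) → ℝ)
    (hAc : Continuous A)
    (hAsym : tensSym A) (hAell : tensElliptic A cm) (hAbd : tensBounded A cp)
    (W : Fin 1 → Fin 1 → (Fin (1 + 1) → ℝ) → (Fin (1 + 1) → ℝ))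
    (hW : ∀ α β, ContDiff ℝ 1 (W α β))
    (hWper : ∀ α β, XPeriodic (W α β))
    (hWcorr : BendCorr A W)
    (α β γ δ : Fin 1)
    (ξ : ℝ → ℝ) (hξc : Continuous ξ)
    (Wxi : (Fin (1 + 1) → ℝ) → (Fin (1 + 1) → ℝ))
    (hWxi : ContDiff ℝ 1 Wxi) (hWxiper : XPeriodic Wxi)
    (hWxicorr : ∀ v : (Fin (1 + 1) → ℝ) → (Fin (1 + 1) → ℝ), ContDiff ℝ 1 v → XPeriodic v →
        (∫ x in cellY 1, ∑ i : Fin (1 + 1), ∑ j : Fin (1 + 1),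
          (∑ k : Fin (1 + 1), ∑ l : Fin (1 + 1),
            A x i j k l * (strain Wxi x k l - ξ (x (Fin.last 1)) * membM α β k l))
            * strain v x i j) = 0) :
    (∫ t in Set.Ioo (-(1:ℝ)/2) (1/2), ξ t * Sstar A W α β γ δ t)
      = (∫ t in Set.Ioo (-(1:ℝ)/2) (1/2), t * Txi A Wxi ξ α β γ δ t)
    ∧ Real.sqrt (∫ t in Set.Ioo (-(1:ℝ)/2) (1/2), (Sstar A W α β γ δ t) ^ 2)
        ≤ cp ^ 2 / cm + cp := by
  have hσ : Continuous fun x => stress A x (bendStrain W γ δ x) :=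
    hAc.stress (continuous_profileStrain (hW γ δ) continuous_id γ δ)
  have hσxi : Continuous fun x => stress A x (profileStrain Wxi ξ α β x) :=
    hAc.stress (continuous_profileStrain hWxi hξc α β)
  constructor
  · have key := integral_mul_stress_profileStrain_comm hAc hAsym (hW γ δ) (hWper γ δ)
      continuous_id (hWcorr γ δ) hWxi hWxiper hξc hWxicorr
    rw [setIntegral_cellY_mul_last (by fun_prop : Continuous _).integrableOn_cellY,
      setIntegral_cellY_mul_last (by fun_prop : Continuous _).integrableOn_cellY] at key
    simp only [Sstar_eq_setIntegral_stress, Txi_eq_setIntegral_stress]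
    exact key
  · -- For `d = 2` the planar indices coincide, so the bending strain is symmetric and
    -- ellipticity applies to it.
    obtain rfl : γ = δ := Subsingleton.elim _ _
    calc Real.sqrt (∫ t in Set.Ioo (-(1:ℝ)/2) (1/2), (Sstar A W α β γ γ t) ^ 2)
        ≤ Real.sqrt
            (∫ x in cellY 1, stress A x (bendStrain W γ γ x) α.castSucc β.castSucc ^ 2) := by
          simpa only [Sstar_eq_setIntegral_stress] using
            Real.sqrt_le_sqrt (integral_sq_setIntegral_slice_le
              (f := fun x => stress A x (bendStrain W γ γ x) α.castSucc β.castSucc) (by fun_prop))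
      _ ≤ Real.sqrt ((cp ^ 2 / (2 * cm)) ^ 2) := Real.sqrt_le_sqrt
          (integral_stress_bendStrain_sq_le hcm hAc hAell hAbd (hW γ γ) (hWper γ γ)
            (hWcorr γ γ) _ _)
      _ = cp ^ 2 / (2 * cm) := Real.sqrt_sq (by positivity)
      _ ≤ cp ^ 2 / cm + cp := by
          have : cp ^ 2 / (2 * cm) ≤ cp ^ 2 / cm := by gcongr; linarith
          linarith

/-- In dimension `d = 2`: for every odd `ξ ∈ L²(-1/2,1/2)` one has
`∫ ξ S*_{αβγδ} = ∫ x_d (T^{*,ξ}_{αβ})_{γδ}`, together with the bound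
`‖S*_{αβγδ}‖_{L²(-1/2,1/2)} ≤ c₊²/c₋ + c₊`. -/
theorem statement18 (cm cp : ℝ) (hcm : 0 < cm) (hcp : 0 < cp)
    (A : (Fin (1 + 1) → ℝ) → Fin (1 + 1) → Fin (1 + 1) → Fin (1 + 1) → Fin (1 + 1) → ℝ)
    (hAc : Continuous A) (hAper : XPeriodic A)
    (hAsym : tensSym A) (hAell : tensElliptic A cm) (hAbd : tensBounded A cp)
    (W : Fin 1 → Fin 1 → (Fin (1 + 1) → ℝ) → (Fin (1 + 1) → ℝ))
    (hW : ∀ α β, ContDiff ℝ 1 (W α β))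
    (hWper : ∀ α β, XPeriodic (W α β))
    (hWmean : ∀ (α β : Fin 1) (i : Fin (1 + 1)), (∫ x in cellY 1, W α β x i) = 0)
    (hWcorr : BendCorr A W)
    (α β γ δ : Fin 1)
    (ξ : ℝ → ℝ) (hξc : Continuous ξ) (hξodd : ∀ t : ℝ, ξ (-t) = - ξ t)
    (hξ2 : Integrable (fun t => (ξ t) ^ 2) (volume.restrict (Set.Ioo (-(1:ℝ)/2) (1/2))))
    (Wxi : (Fin (1 + 1) → ℝ) → (Fin (1 + 1) → ℝ))
    (hWxi : ContDiff ℝ 1 Wxi) (hWxiper : XPeriodic Wxi)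
    (hWximean : ∀ i : Fin (1 + 1), (∫ x in cellY 1, Wxi x i) = 0)
    (hWxicorr : ∀ v : (Fin (1 + 1) → ℝ) → (Fin (1 + 1) → ℝ), ContDiff ℝ 1 v → XPeriodic v →
        (∫ x in cellY 1, ∑ i : Fin (1 + 1), ∑ j : Fin (1 + 1),
          (∑ k : Fin (1 + 1), ∑ l : Fin (1 + 1),
            A x i j k l * (strain Wxi x k l - ξ (x (Fin.last 1)) * membM α β k l))
            * strain v x i j) = 0) :
    (∫ t in Set.Ioo (-(1:ℝ)/2) (1/2), ξ t * Sstar A W α β γ δ t)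
      = (∫ t in Set.Ioo (-(1:ℝ)/2) (1/2), t * Txi A Wxi ξ α β γ δ t)
    ∧ Real.sqrt (∫ t in Set.Ioo (-(1:ℝ)/2) (1/2), (Sstar A W α β γ δ t) ^ 2)
        ≤ cp ^ 2 / cm + cp :=
  statement18_general cm cp hcm hcp A hAc hAsym hAell hAbd W hW hWper hWcorr α β γ δ ξ hξc Wxi hWxi
    hWxiper hWxicorr
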